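/- Let all preferences in P be substitutable and satisfy the law of aggregate demand, and let μ and μ̃ be stable matchings with μ ⪰_F μ̃. If μ̃ is a cyclic matching under the reduced preference profile P^{μ,μ̃} (i.e. μ̃ = μ_σ for some cycle σ for P^{μ,μ̃}), then μ̃ is a cyclic matching under the reduced preference profile P^μ (the reduced profile with respect to μ and the worker-optimal stable matching μ_W). -/
import Mathlib


open Finset

noncomputable section

open scoped Classical

/-- `C` is a choice function: `C S ⊆ S` for every `S`. -/
def IsChoiceFun {α : Type*} (C : Finset α → Finset α) : Prop := ∀ S, C S ⊆ S

/-- Substitutability of a choice function: if `b` is chosen from `S`, then `b` is chosen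
from `S' ∪ {b}` for every `S' ⊆ S`. -/
def Substitutable {α : Type*} [DecidableEq α] (C : Finset α → Finset α) : Prop :=
  ∀ (S S' : Finset α) (b : α), S' ⊆ S → b ∈ C S → b ∈ C (insert b S')

/-- The law of aggregate demand for a choice function. -/
def LAD {α : Type*} (C : Finset α → Finset α) : Prop :=
  ∀ S' S : Finset α, S' ⊆ S → (C S').card ≤ (C S).card

/-- The most `u`-preferred subset of `S` among the members of the family `A` of acceptable
sets (the empty set is always available as a fallback). -/
def bestIn {α : Type*} (u : Finset α → ℕ) (A : Set (Finset α)) (S : Finset α) : Finset α := by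
  classical
  have h : ∃ T ∈ (S.powerset).filter (fun T => T ∈ A ∨ T = ∅),
      ∀ T' ∈ (S.powerset).filter (fun T => T ∈ A ∨ T = ∅), u T' ≤ u T :=
    Finset.exists_max_image _ u ⟨∅, by simp⟩
  exact h.choose

/-- A many-to-many matching market: each firm `f` has a strict preference over subsets
of workers, represented by an injective utility `uF f`, and symmetrically for workers. -/
structure Market (F W : Type*) where
  uF : F → Finset W → ℕ
  uW : W → Finset F → ℕ
  injF : ∀ f, Function.Injective (uF f)
  injW : ∀ w, Function.Injective (uW w)

/-- A many-to-many matching. -/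
structure Matching (F W : Type*) where
  fm : F → Finset W
  wm : W → Finset F
  consistent : ∀ f w, w ∈ fm f ↔ f ∈ wm w

namespace Market

variable {F W : Type*} [DecidableEq F] [DecidableEq W]

/-- The choice set of firm `f` under the original preference: the most preferred
subset among the acceptable subsets (those strictly preferred to `∅`). -/
def Cf (M : Market F W) (f : F) : Finset W → Finset W :=
  bestIn (M.uF f) {T | M.uF f ∅ < M.uF f T}

/-- The choice set of worker `w` under the original preference. -/
def Cw (M : Market F W) (w : W) : Finset F → Finset F :=
  bestIn (M.uW w) {T | M.uW w ∅ < M.uW w T}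

/-- Individual rationality under the original profile. -/
def IR (M : Market F W) (μ : Matching F W) : Prop :=
  (∀ f, M.Cf f (μ.fm f) = μ.fm f) ∧ (∀ w, M.Cw w (μ.wm w) = μ.wm w)

/-- `(f,w)` blocks `μ` under the original profile. -/
def Blocks (M : Market F W) (μ : Matching F W) (f : F) (w : W) : Prop :=
  w ∉ μ.fm f ∧ w ∈ M.Cf f (insert w (μ.fm f)) ∧ f ∈ M.Cw w (insert f (μ.wm w))

/-- Stability under the original profile. -/
def Stable (M : Market F W) (μ : Matching F W) : Prop :=
  M.IR μ ∧ ∀ f w, ¬ M.Blocks μ f w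

/-- Blair's partial order for firm `f`: `S ⪰_f S'` iff `C_f (S ∪ S') = S`. -/
def blairF (M : Market F W) (f : F) (S S' : Finset W) : Prop := M.Cf f (S ∪ S') = S

/-- Blair's partial order for worker `w`. -/
def blairW (M : Market F W) (w : W) (S S' : Finset F) : Prop := M.Cw w (S ∪ S') = S

/-- The unanimous Blair order for the firms' side: `μ ⪰_F μ'`. -/
def geF (M : Market F W) (μ μ' : Matching F W) : Prop := ∀ f, M.blairF f (μ.fm f) (μ'.fm f)

/-- The unanimous Blair order for the workers' side: `μ ⪰_W μ'`. -/
def geW (M : Market F W) (μ μ' : Matching F W) : Prop := ∀ w, M.blairW w (μ.wm w) (μ'.wm w)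

/-- Strict unanimous Blair order for the firms' side: `μ ≻_F μ'`. -/
def gtF (M : Market F W) (μ μ' : Matching F W) : Prop := M.geF μ μ' ∧ μ ≠ μ'

/-- Workers deleted from `f`'s list in Step 1(a) of the reduction procedure:
those belonging to some `W' ≻_f μ(f)` but not to `μ(f)`. -/
def D1 (M : Market F W) (μ : Matching F W) (f : F) : Set W :=
  {x | ∃ W' : Finset W, (M.Cf f (W' ∪ μ.fm f) = W' ∧ W' ≠ μ.fm f) ∧ x ∈ W' ∧ x ∉ μ.fm f}

/-- Workers deleted from `f`'s list in Step 2(a): those belonging to some `W'` with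
`μ̃(f) ≻_f W'` but not to `μ̃(f)`. -/
def D2 (M : Market F W) (μt : Matching F W) (f : F) : Set W :=
  {x | ∃ W' : Finset W, (M.Cf f (μt.fm f ∪ W') = μt.fm f ∧ μt.fm f ≠ W') ∧ x ∈ W' ∧ x ∉ μt.fm f}

/-- Firms deleted from `w`'s list in Step 1(b). -/
def E1 (M : Market F W) (μt : Matching F W) (w : W) : Set F :=
  {x | ∃ F' : Finset F, (M.Cw w (F' ∪ μt.wm w) = F' ∧ F' ≠ μt.wm w) ∧ x ∈ F' ∧ x ∉ μt.wm w}

/-- Firms deleted from `w`'s list in Step 2(b). -/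
def E2 (M : Market F W) (μ : Matching F W) (w : W) : Set F :=
  {x | ∃ F' : Finset F, (M.Cw w (μ.wm w ∪ F') = μ.wm w ∧ μ.wm w ≠ F') ∧ x ∈ F' ∧ x ∉ μ.wm w}

/-- Workers deleted from `f`'s list in Step 3: those workers `w` for which `{f}` is no
longer on `w`'s list after Steps 1 and 2 (either `{f}` was never acceptable to `w`, or
`f` was deleted from `w`'s list in Step 1(b) or 2(b)). -/
def D3 (M : Market F W) (μ μt : Matching F W) (f : F) : Set W :=
  {w | ¬ (M.uW w ∅ < M.uW w {f}) ∨ f ∈ M.E1 μt w ∪ M.E2 μ w}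

/-- Firms deleted from `w`'s list in Step 3. -/
def E3 (M : Market F W) (μ μt : Matching F W) (w : W) : Set F :=
  {f | ¬ (M.uF f ∅ < M.uF f {w}) ∨ w ∈ M.D1 μ f ∪ M.D2 μt f}

/-- All workers deleted from `f`'s list in the reduction procedure. -/
def Dall (M : Market F W) (μ μt : Matching F W) (f : F) : Set W :=
  M.D1 μ f ∪ M.D2 μt f ∪ M.D3 μ μt f

/-- All firms deleted from `w`'s list in the reduction procedure. -/
def Eall (M : Market F W) (μ μt : Matching F W) (w : W) : Set F :=
  M.E1 μt w ∪ M.E2 μ w ∪ M.E3 μ μt w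

/-- The family of sets surviving in `f`'s list under the reduced profile `P^{μ,μ̃}`:
originally acceptable sets containing no deleted worker. -/
def RAf (M : Market F W) (μ μt : Matching F W) (f : F) : Set (Finset W) :=
  {T | M.uF f ∅ < M.uF f T ∧ ∀ x ∈ T, x ∉ M.Dall μ μt f}

/-- The family of sets surviving in `w`'s list under the reduced profile `P^{μ,μ̃}`. -/
def RAw (M : Market F W) (μ μt : Matching F W) (w : W) : Set (Finset F) :=
  {T | M.uW w ∅ < M.uW w T ∧ ∀ x ∈ T, x ∉ M.Eall μ μt w}

/-- The choice set `C^{μ,μ̃}_f` of firm `f` under the reduced profile. -/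
def Cfred (M : Market F W) (μ μt : Matching F W) (f : F) : Finset W → Finset W :=
  bestIn (M.uF f) (M.RAf μ μt f)

/-- The choice set `C^{μ,μ̃}_w` of worker `w` under the reduced profile. -/
def Cwred (M : Market F W) (μ μt : Matching F W) (w : W) : Finset F → Finset F :=
  bestIn (M.uW w) (M.RAw μ μt w)

/-- Individual rationality under the reduced profile `P^{μ,μ̃}`. -/
def IRred (M : Market F W) (μ μt ν : Matching F W) : Prop :=
  (∀ f, M.Cfred μ μt f (ν.fm f) = ν.fm f) ∧ (∀ w, M.Cwred μ μt w (ν.wm w) = ν.wm w)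

/-- Blocking under the reduced profile `P^{μ,μ̃}`. -/
def Blocksred (M : Market F W) (μ μt ν : Matching F W) (f : F) (w : W) : Prop :=
  w ∉ ν.fm f ∧ w ∈ M.Cfred μ μt f (insert w (ν.fm f)) ∧
    f ∈ M.Cwred μ μt w (insert f (ν.wm w))

/-- Stability under the reduced profile `P^{μ,μ̃}`. -/
def Stablered (M : Market F W) (μ μt ν : Matching F W) : Prop :=
  M.IRred μ μt ν ∧ ∀ f w, ¬ M.Blocksred μ μt ν f w

/-- The unanimous Blair order on the firms' side computed with the reduced choice sets. -/
def geFred (M : Market F W) (μ μt ν ν' : Matching F W) : Prop :=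
  ∀ f, M.Cfred μ μt f (ν.fm f ∪ ν'.fm f) = ν.fm f

/-- The unanimous Blair order on the workers' side computed with the reduced choice sets. -/
def geWred (M : Market F W) (μ μt ν ν' : Matching F W) : Prop :=
  ∀ w, M.Cwred μ μt w (ν.wm w ∪ ν'.wm w) = ν.wm w

/-- All preferences in the market are substitutable. -/
def SubstAll (M : Market F W) : Prop :=
  (∀ f, Substitutable (M.Cf f)) ∧ (∀ w, Substitutable (M.Cw w))

/-- All preferences in the market satisfy the law of aggregate demand. -/
def LADAll (M : Market F W) : Prop :=
  (∀ f, LAD (M.Cf f)) ∧ (∀ w, LAD (M.Cw w))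

/-- A cycle for the reduced profile `P^{μ,μ̃}`: an `r`-periodic sequence of worker-firm
pairs `(w_i, f_i)` (indexed cyclically) such that (i) `w_i ∈ μ(f_i) \ μ̃(f_i)`;
(ii) `C^{μ,μ̃}_{f_i}(W \ {w_i}) = (μ(f_i) \ {w_i}) ∪ {w_{i+1}}`; and (iii)
`C^{μ,μ̃}_{w_{i+1}}(μ(w_{i+1}) ∪ {f_i}) = (μ(w_{i+1}) \ {f_{i+1}}) ∪ {f_i}`. -/
def IsCycle [Fintype W] (M : Market F W) (μ μt : Matching F W) (r : ℕ)
    (w : ℕ → W) (f : ℕ → F) : Prop :=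
  0 < r ∧ (∀ i, w (i + r) = w i) ∧ (∀ i, f (i + r) = f i) ∧
  ∀ i, (w i ∈ μ.fm (f i) ∧ w i ∉ μt.fm (f i)) ∧
    M.Cfred μ μt (f i) (Finset.univ \ {w i}) = insert (w (i + 1)) (μ.fm (f i) \ {w i}) ∧
    M.Cwred μ μt (w (i + 1)) (μ.wm (w (i + 1)) ∪ {f i}) =
      insert (f i) (μ.wm (w (i + 1)) \ {f (i + 1)})

/-- The firm-side assignment of the cyclic matching `μ_σ` obtained from the cycle
`σ = (w, f)` of length `r`. -/
def cyclicFm (μ : Matching F W) (r : ℕ) (w : ℕ → W) (f : ℕ → F) (g : F) : Finset W :=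
  if ∃ i ∈ Finset.range r, f i = g then
    (μ.fm g \ ((Finset.range r).filter (fun i => f i = g)).image w) ∪
      ((Finset.range r).filter (fun i => f i = g)).image (fun i => w (i + 1))
  else μ.fm g

/-- `ν` is a cyclic matching under the reduced profile `P^{μ,μ̃}`: `ν = μ_σ` for some
cycle `σ` for `P^{μ,μ̃}` (the worker side of `ν` is determined by consistency). -/
def IsCyclicMatching [Fintype W] (M : Market F W) (μ μt ν : Matching F W) : Prop :=
  ∃ (r : ℕ) (w : ℕ → W) (f : ℕ → F),
    M.IsCycle μ μt r w f ∧ ∀ g, ν.fm g = cyclicFm μ r w f g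

end Market

/-! ### Auxiliary lemmas -/

section BestInLemmas

variable {α : Type*} {u : Finset α → ℕ} {A A' : Set (Finset α)} {S S₁ S' : Finset α}

lemma bestIn_spec (u : Finset α → ℕ) (A : Set (Finset α)) (S : Finset α) :
    (bestIn u A S ⊆ S ∧ (bestIn u A S ∈ A ∨ bestIn u A S = ∅)) ∧
      ∀ T ⊆ S, (T ∈ A ∨ T = ∅) → u T ≤ u (bestIn u A S) := by
  classical
  have h : ∃ T ∈ (S.powerset).filter (fun T => T ∈ A ∨ T = ∅),
      ∀ T' ∈ (S.powerset).filter (fun T => T ∈ A ∨ T = ∅), u T' ≤ u T :=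
    Finset.exists_max_image _ u ⟨∅, by simp⟩
  have heq : bestIn u A S = h.choose := rfl
  obtain ⟨hm, hmax⟩ := h.choose_spec
  rw [Finset.mem_filter, Finset.mem_powerset] at hm
  refine ⟨⟨heq ▸ hm.1, heq ▸ hm.2⟩, fun T hTS hTA => ?_⟩
  rw [heq]
  exact hmax T (Finset.mem_filter.mpr ⟨Finset.mem_powerset.mpr hTS, hTA⟩)

lemma bestIn_subset (u : Finset α → ℕ) (A : Set (Finset α)) (S : Finset α) :
    bestIn u A S ⊆ S := (bestIn_spec u A S).1.1

lemma bestIn_mem_or_empty (u : Finset α → ℕ) (A : Set (Finset α)) (S : Finset α) :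
    bestIn u A S ∈ A ∨ bestIn u A S = ∅ := (bestIn_spec u A S).1.2

lemma le_bestIn {T : Finset α} (hTS : T ⊆ S) (hTA : T ∈ A ∨ T = ∅) :
    u T ≤ u (bestIn u A S) := (bestIn_spec u A S).2 T hTS hTA

lemma bestIn_eq_of (hu : Function.Injective u) {m : Finset α} (hm : m ⊆ S)
    (hA : m ∈ A ∨ m = ∅) (hmax : ∀ T ⊆ S, (T ∈ A ∨ T = ∅) → u T ≤ u m) :
    bestIn u A S = m :=
  hu (le_antisymm (hmax _ (bestIn_subset u A S) (bestIn_mem_or_empty u A S))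
    (le_bestIn hm hA))

lemma bestIn_congr (hu : Function.Injective u)
    (h : ∀ T : Finset α, (T ⊆ S ∧ (T ∈ A ∨ T = ∅)) ↔ (T ⊆ S' ∧ (T ∈ A' ∨ T = ∅))) :
    bestIn u A S = bestIn u A' S' := by
  obtain ⟨h1, h2⟩ := (h (bestIn u A' S')).mpr
    ⟨bestIn_subset u A' S', bestIn_mem_or_empty u A' S'⟩
  refine bestIn_eq_of hu h1 h2 (fun T hTS hTA => ?_)
  obtain ⟨h3, h4⟩ := (h T).mp ⟨hTS, hTA⟩
  exact le_bestIn h3 h4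

lemma bestIn_L1 (hu : Function.Injective u) (h1 : bestIn u A S ⊆ S₁) (h2 : S₁ ⊆ S) :
    bestIn u A S₁ = bestIn u A S :=
  bestIn_eq_of hu h1 (bestIn_mem_or_empty u A S)
    (fun T hTS hTA => le_bestIn (hTS.trans h2) hTA)

end BestInLemmas

namespace Market

variable {F W : Type*} [DecidableEq F] [DecidableEq W] (M : Market F W)

lemma Cf_subset (f : F) (S : Finset W) : M.Cf f S ⊆ S := bestIn_subset _ _ _

lemma Cw_subset (w : W) (S : Finset F) : M.Cw w S ⊆ S := bestIn_subset _ _ _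

lemma Cf_L1 {f : F} {S₁ S : Finset W} (h1 : M.Cf f S ⊆ S₁) (h2 : S₁ ⊆ S) :
    M.Cf f S₁ = M.Cf f S := bestIn_L1 (M.injF f) h1 h2

lemma Cw_L1 {w : W} {S₁ S : Finset F} (h1 : M.Cw w S ⊆ S₁) (h2 : S₁ ⊆ S) :
    M.Cw w S₁ = M.Cw w S := bestIn_L1 (M.injW w) h1 h2

/-- If a firm `f` is chosen by `w` from some set, then `{f}` is acceptable to `w`. -/
lemma acc_of_mem_Cw {w : W} {f : F} {S : Finset F} (hs : Substitutable (M.Cw w))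
    (h : f ∈ M.Cw w S) : M.uW w ∅ < M.uW w {f} := by
  have h1 : f ∈ M.Cw w (insert f ∅) := hs S ∅ f (Finset.empty_subset _) h
  have h2 : M.Cw w {f} = {f} := by
    apply Finset.Subset.antisymm (M.Cw_subset w {f})
    simpa using h1
  rcases bestIn_mem_or_empty (M.uW w) {T | M.uW w ∅ < M.uW w T} {f} with hm | hm
  · rw [show bestIn (M.uW w) {T | M.uW w ∅ < M.uW w T} {f} = M.Cw w {f} from rfl, h2] at hm
    exact hm
  · rw [show bestIn (M.uW w) {T | M.uW w ∅ < M.uW w T} {f} = M.Cw w {f} from rfl, h2] at hm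
    simp at hm

/-- The reduced choice of a firm equals the original choice on the set of survivors. -/
lemma Cfred_eq_filter (μ μt : Matching F W) (f : F) (S : Finset W) :
    M.Cfred μ μt f S = M.Cf f (S.filter (fun x => x ∉ M.Dall μ μt f)) := by
  apply bestIn_congr (M.injF f)
  intro T
  constructor
  · rintro ⟨hTS, hor⟩
    rcases hor with ⟨hacc, hnd⟩ | rfl
    · exact ⟨fun x hx => Finset.mem_filter.mpr ⟨hTS hx, hnd x hx⟩, Or.inl hacc⟩
    · exact ⟨Finset.empty_subset _, Or.inr rfl⟩
  · rintro ⟨hTf, hor⟩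
    have hTS : T ⊆ S := fun x hx => (Finset.mem_filter.mp (hTf hx)).1
    rcases hor with hacc | rfl
    · exact ⟨hTS, Or.inl ⟨hacc, fun x hx => (Finset.mem_filter.mp (hTf hx)).2⟩⟩
    · exact ⟨Finset.empty_subset _, Or.inr rfl⟩

lemma Cwred_eq_filter (μ μt : Matching F W) (w : W) (S : Finset F) :
    M.Cwred μ μt w S = M.Cw w (S.filter (fun x => x ∉ M.Eall μ μt w)) := by
  apply bestIn_congr (M.injW w)
  intro T
  constructor
  · rintro ⟨hTS, hor⟩
    rcases hor with ⟨hacc, hnd⟩ | rfl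
    · exact ⟨fun x hx => Finset.mem_filter.mpr ⟨hTS hx, hnd x hx⟩, Or.inl hacc⟩
    · exact ⟨Finset.empty_subset _, Or.inr rfl⟩
  · rintro ⟨hTf, hor⟩
    have hTS : T ⊆ S := fun x hx => (Finset.mem_filter.mp (hTf hx)).1
    rcases hor with hacc | rfl
    · exact ⟨hTS, Or.inl ⟨hacc, fun x hx => (Finset.mem_filter.mp (hTf hx)).2⟩⟩
    · exact ⟨Finset.empty_subset _, Or.inr rfl⟩

end Market

namespace Market

set_option linter.unusedSectionVars false

variable {F W : Type*} [DecidableEq F] [DecidableEq W] (M : Market F W)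

lemma mem_D1_iff {μ : Matching F W} {f : F} {x : W} (hs : Substitutable (M.Cf f)) :
    x ∈ M.D1 μ f ↔ x ∉ μ.fm f ∧ x ∈ M.Cf f (insert x (μ.fm f)) := by
  constructor
  · rintro ⟨W', ⟨hc, hne⟩, hxW, hxμ⟩
    refine ⟨hxμ, ?_⟩
    have : x ∈ M.Cf f (W' ∪ μ.fm f) := by rw [hc]; exact hxW
    exact hs _ _ x Finset.subset_union_right this
  · rintro ⟨hxμ, hx⟩
    refine ⟨M.Cf f (insert x (μ.fm f)), ⟨?_, ?_⟩, hx, hxμ⟩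
    · have : M.Cf f (insert x (μ.fm f)) ∪ μ.fm f = insert x (μ.fm f) := by
        apply Finset.Subset.antisymm
        · exact Finset.union_subset (M.Cf_subset _ _) (Finset.subset_insert _ _)
        · exact Finset.insert_subset (Finset.mem_union_left _ hx) Finset.subset_union_right
      rw [this]
    · intro h
      rw [h] at hx; exact hxμ hx

lemma mem_D2_iff {ν : Matching F W} {f : F} {x : W} (hIR : M.Cf f (ν.fm f) = ν.fm f) :
    x ∈ M.D2 ν f ↔ x ∉ ν.fm f ∧ x ∉ M.Cf f (insert x (ν.fm f)) := by
  constructor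
  · rintro ⟨W', ⟨hc, hne⟩, hxW, hxν⟩
    refine ⟨hxν, ?_⟩
    have h1 : M.Cf f (insert x (ν.fm f)) = M.Cf f (ν.fm f ∪ W') :=
      M.Cf_L1 (by rw [hc]; exact Finset.subset_insert _ _)
        (Finset.insert_subset (Finset.mem_union_right _ hxW) Finset.subset_union_left)
    rw [h1, hc]; exact hxν
  · rintro ⟨hxν, hx⟩
    refine ⟨insert x (ν.fm f), ⟨?_, ?_⟩, Finset.mem_insert_self _ _, hxν⟩
    · have hu : ν.fm f ∪ insert x (ν.fm f) = insert x (ν.fm f) :=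
        Finset.union_eq_right.mpr (Finset.subset_insert _ _)
      rw [hu]
      have hsub : M.Cf f (insert x (ν.fm f)) ⊆ ν.fm f := by
        intro y hy
        have := M.Cf_subset f (insert x (ν.fm f)) hy
        rcases Finset.mem_insert.mp this with rfl | h
        · exact absurd hy hx
        · exact h
      rw [← M.Cf_L1 hsub (Finset.subset_insert _ _)]; exact hIR
    · intro h
      have : x ∈ ν.fm f := by rw [h]; exact Finset.mem_insert_self _ _
      exact hxν this

lemma mem_E1_iff {ν : Matching F W} {w : W} {f : F} (hs : Substitutable (M.Cw w)) :
    f ∈ M.E1 ν w ↔ f ∉ ν.wm w ∧ f ∈ M.Cw w (insert f (ν.wm w)) := by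
  constructor
  · rintro ⟨F', ⟨hc, hne⟩, hxF, hxν⟩
    refine ⟨hxν, ?_⟩
    have : f ∈ M.Cw w (F' ∪ ν.wm w) := by rw [hc]; exact hxF
    exact hs _ _ f Finset.subset_union_right this
  · rintro ⟨hxν, hx⟩
    refine ⟨M.Cw w (insert f (ν.wm w)), ⟨?_, ?_⟩, hx, hxν⟩
    · have : M.Cw w (insert f (ν.wm w)) ∪ ν.wm w = insert f (ν.wm w) := by
        apply Finset.Subset.antisymm
        · exact Finset.union_subset (M.Cw_subset _ _) (Finset.subset_insert _ _)
        · exact Finset.insert_subset (Finset.mem_union_left _ hx) Finset.subset_union_right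
      rw [this]
    · intro h
      rw [h] at hx; exact hxν hx

lemma mem_E2_iff {μ : Matching F W} {w : W} {f : F} (hIR : M.Cw w (μ.wm w) = μ.wm w) :
    f ∈ M.E2 μ w ↔ f ∉ μ.wm w ∧ f ∉ M.Cw w (insert f (μ.wm w)) := by
  constructor
  · rintro ⟨F', ⟨hc, hne⟩, hxF, hxμ⟩
    refine ⟨hxμ, ?_⟩
    have h1 : M.Cw w (insert f (μ.wm w)) = M.Cw w (μ.wm w ∪ F') :=
      M.Cw_L1 (by rw [hc]; exact Finset.subset_insert _ _)
        (Finset.insert_subset (Finset.mem_union_right _ hxF) Finset.subset_union_left)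
    rw [h1, hc]; exact hxμ
  · rintro ⟨hxμ, hx⟩
    refine ⟨insert f (μ.wm w), ⟨?_, ?_⟩, Finset.mem_insert_self _ _, hxμ⟩
    · have hu : μ.wm w ∪ insert f (μ.wm w) = insert f (μ.wm w) :=
        Finset.union_eq_right.mpr (Finset.subset_insert _ _)
      rw [hu]
      have hsub : M.Cw w (insert f (μ.wm w)) ⊆ μ.wm w := by
        intro y hy
        have := M.Cw_subset w (insert f (μ.wm w)) hy
        rcases Finset.mem_insert.mp this with rfl | h
        · exact absurd hy hx
        · exact h
      rw [← M.Cw_L1 hsub (Finset.subset_insert _ _)]; exact hIR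
    · intro h
      have : f ∈ μ.wm w := by rw [h]; exact Finset.mem_insert_self _ _
      exact hxμ this

end Market

namespace Market

set_option linter.unusedSectionVars false

variable {F W : Type*} [DecidableEq F] [DecidableEq W] (M : Market F W)

/-- Polarization: if `μ ⪰_F μ'` for stable matchings, then `μ' ⪰_W μ`. -/
lemma geW_of_geF (hsub : M.SubstAll) {μ μ' : Matching F W} (hμ : M.Stable μ)
    (hμ' : M.Stable μ') (hge : M.geF μ μ') : M.geW μ' μ := by
  intro w
  have hsubset : M.Cw w (μ'.wm w ∪ μ.wm w) ⊆ μ'.wm w := by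
    intro g hg
    by_contra hgν
    have hgμ : g ∈ μ.wm w := by
      rcases Finset.mem_union.mp (M.Cw_subset _ _ hg) with h | h
      · exact absurd h hgν
      · exact h
    have hb1 : g ∈ M.Cw w (insert g (μ'.wm w)) :=
      hsub.2 w _ _ g Finset.subset_union_left hg
    have hwf : w ∈ M.Cf g (insert w (μ'.fm g)) := by
      have hwμ : w ∈ M.Cf g (μ.fm g ∪ μ'.fm g) := by
        rw [hge g]; exact (μ.consistent g w).mpr hgμ
      exact hsub.1 g _ _ w Finset.subset_union_right hwμ
    have hwnμ' : w ∉ μ'.fm g := fun h => hgν ((μ'.consistent g w).mp h)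
    exact hμ'.2 g w ⟨hwnμ', hwf, hb1⟩
  have := M.Cw_L1 hsubset Finset.subset_union_left
  rw [hμ'.1.2 w] at this
  exact this.symm

/-- Polarization: if `ν ⪰_W ν'` for stable matchings, then `ν' ⪰_F ν`. -/
lemma geF_of_geW (hsub : M.SubstAll) {ν ν' : Matching F W} (hν : M.Stable ν)
    (hν' : M.Stable ν') (hge : M.geW ν ν') : M.geF ν' ν := by
  intro f
  have hsubset : M.Cf f (ν'.fm f ∪ ν.fm f) ⊆ ν'.fm f := by
    intro x hx
    by_contra hxν'
    have hxν : x ∈ ν.fm f := by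
      rcases Finset.mem_union.mp (M.Cf_subset _ _ hx) with h | h
      · exact absurd h hxν'
      · exact h
    have hb1 : x ∈ M.Cf f (insert x (ν'.fm f)) :=
      hsub.1 f _ _ x Finset.subset_union_left hx
    have hfw : f ∈ M.Cw x (insert f (ν'.wm x)) := by
      have hfν : f ∈ M.Cw x (ν.wm x ∪ ν'.wm x) := by
        rw [hge x]; exact (ν.consistent f x).mp hxν
      exact hsub.2 x _ _ f Finset.subset_union_right hfν
    have hxnν' : x ∉ ν'.fm f := hxν'
    exact hν'.2 f x ⟨hxnν', hb1, hfw⟩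
  have := M.Cf_L1 hsubset Finset.subset_union_left
  rw [hν'.1.1 f] at this
  exact this.symm

end Market

namespace Market

set_option linter.unusedSectionVars false

variable {F W : Type*} [DecidableEq F] [DecidableEq W] (M : Market F W)

lemma D2_sub (hsub : M.SubstAll) {μt μW : Matching F W}
    (hIRt : ∀ f, M.Cf f (μt.fm f) = μt.fm f) (hIRW : ∀ f, M.Cf f (μW.fm f) = μW.fm f)
    (hFt : M.geF μt μW) (f : F) : M.D2 μW f ⊆ M.D2 μt f := by
  intro x hx
  rw [M.mem_D2_iff (hIRW f)] at hx
  obtain ⟨hxW, hrej⟩ := hx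
  rw [M.mem_D2_iff (hIRt f)]
  have hxt : x ∉ μt.fm f := by
    intro h
    have : x ∈ M.Cf f (μt.fm f ∪ μW.fm f) := by rw [hFt f]; exact h
    exact hrej (hsub.1 f _ _ x Finset.subset_union_right this)
  refine ⟨hxt, fun hmem => ?_⟩
  by_cases hxY : x ∈ M.Cf f (insert x (μt.fm f ∪ μW.fm f))
  · exact hrej (hsub.1 f _ _ x
      (Finset.subset_union_right.trans (Finset.subset_insert _ _)) hxY)
  · have hYsub : M.Cf f (insert x (μt.fm f ∪ μW.fm f)) ⊆ μt.fm f ∪ μW.fm f := by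
      intro y hy
      rcases Finset.mem_insert.mp (M.Cf_subset _ _ hy) with rfl | h
      · exact absurd hy hxY
      · exact h
    have h1 : M.Cf f (μt.fm f ∪ μW.fm f) = M.Cf f (insert x (μt.fm f ∪ μW.fm f)) :=
      M.Cf_L1 hYsub (Finset.subset_insert _ _)
    have h2 : M.Cf f (insert x (μt.fm f)) = M.Cf f (insert x (μt.fm f ∪ μW.fm f)) := by
      apply M.Cf_L1
      · rw [← h1, hFt f]; exact Finset.subset_insert _ _
      · exact Finset.insert_subset_insert _ Finset.subset_union_left
    rw [h2, ← h1, hFt f] at hmem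
    exact hxt hmem

lemma E1_sub (hsub : M.SubstAll) {μt μW : Matching F W}
    (hWt : M.geW μW μt) (w : W) : M.E1 μW w ⊆ M.E1 μt w := by
  intro g hg
  rw [M.mem_E1_iff (hsub.2 w)] at hg
  obtain ⟨hgW, hmem⟩ := hg
  rw [M.mem_E1_iff (hsub.2 w)]
  have hreju : M.Cw w (μW.wm w ∪ μt.wm w) = μW.wm w := hWt w
  have hgt : g ∉ μt.wm w := by
    intro h
    have h1 : M.Cw w (insert g (μW.wm w)) = M.Cw w (μW.wm w ∪ μt.wm w) := by
      apply M.Cw_L1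
      · rw [hreju]; exact Finset.subset_insert _ _
      · exact Finset.insert_subset (Finset.mem_union_right _ h) Finset.subset_union_left
    rw [h1, hreju] at hmem
    exact hgW hmem
  refine ⟨hgt, ?_⟩
  by_cases hgY : g ∈ M.Cw w (insert g (μW.wm w ∪ μt.wm w))
  · exact hsub.2 w _ _ g
      (Finset.subset_union_right.trans (Finset.subset_insert _ _)) hgY
  · exfalso
    have hYsub : M.Cw w (insert g (μW.wm w ∪ μt.wm w)) ⊆ μW.wm w ∪ μt.wm w := by
      intro y hy
      rcases Finset.mem_insert.mp (M.Cw_subset _ _ hy) with rfl | h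
      · exact absurd hy hgY
      · exact h
    have h1 : M.Cw w (μW.wm w ∪ μt.wm w) = M.Cw w (insert g (μW.wm w ∪ μt.wm w)) :=
      M.Cw_L1 hYsub (Finset.subset_insert _ _)
    have h2 : M.Cw w (insert g (μW.wm w)) = M.Cw w (insert g (μW.wm w ∪ μt.wm w)) := by
      apply M.Cw_L1
      · rw [← h1, hreju]; exact Finset.subset_insert _ _
      · exact Finset.insert_subset_insert _ Finset.subset_union_left
    rw [h2, ← h1, hreju] at hmem
    exact hgW hmem

lemma Dall_sub (hsub : M.SubstAll) {μ μt μW : Matching F W}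
    (hIRt : ∀ f, M.Cf f (μt.fm f) = μt.fm f) (hIRW : ∀ f, M.Cf f (μW.fm f) = μW.fm f)
    (hFt : M.geF μt μW) (hWt : M.geW μW μt) (f : F) :
    M.Dall μ μW f ⊆ M.Dall μ μt f := by
  rintro x ((h | h) | (hacc | (h1 | h2)))
  · exact Or.inl (Or.inl h)
  · exact Or.inl (Or.inr (M.D2_sub hsub hIRt hIRW hFt f h))
  · exact Or.inr (Or.inl hacc)
  · exact Or.inr (Or.inr (Or.inl (M.E1_sub hsub hWt x h1)))
  · exact Or.inr (Or.inr (Or.inr h2))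

lemma Eall_sub (hsub : M.SubstAll) {μ μt μW : Matching F W}
    (hIRt : ∀ f, M.Cf f (μt.fm f) = μt.fm f) (hIRW : ∀ f, M.Cf f (μW.fm f) = μW.fm f)
    (hFt : M.geF μt μW) (hWt : M.geW μW μt) (w : W) :
    M.Eall μ μW w ⊆ M.Eall μ μt w := by
  rintro g ((h | h) | (hacc | (h1 | h2)))
  · exact Or.inl (Or.inl (M.E1_sub hsub hWt w h))
  · exact Or.inl (Or.inr h)
  · exact Or.inr (Or.inl hacc)
  · exact Or.inr (Or.inr (Or.inl h1))
  · exact Or.inr (Or.inr (Or.inr (M.D2_sub hsub hIRt hIRW hFt g h2)))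
end Market

namespace Market

set_option linter.unusedSectionVars false

variable {F W : Type*} [DecidableEq F] [DecidableEq W] (M : Market F W)

/-- No worker matched to `f` under `μt` is deleted from `f`'s reduced list. -/
lemma mut_not_Dall (hsub : M.SubstAll) {μ μt : Matching F W} (hμ : M.Stable μ)
    (hμt : M.Stable μt) (hWt' : M.geW μt μ) {f : F} {y : W} (hy : y ∈ μt.fm f) :
    y ∉ M.Dall μ μt f := by
  have hfy : f ∈ μt.wm y := (μt.consistent f y).mp hy
  have hfCμ : f ∈ M.Cw y (insert f (μ.wm y)) := by
    have : f ∈ M.Cw y (μt.wm y ∪ μ.wm y) := by rw [hWt' y]; exact hfy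
    exact hsub.2 y _ _ f Finset.subset_union_right this
  rintro ((hD1 | hD2) | (hacc | (hE1 | hE2)))
  · rw [M.mem_D1_iff (hsub.1 f)] at hD1
    obtain ⟨hynμ, hyC⟩ := hD1
    exact hμ.2 f y ⟨hynμ, hyC, hfCμ⟩
  · rw [M.mem_D2_iff (hμt.1.1 f)] at hD2
    exact hD2.1 hy
  · have : f ∈ M.Cw y (μt.wm y) := by rw [hμt.1.2 y]; exact hfy
    exact hacc (M.acc_of_mem_Cw (hsub.2 y) this)
  · rw [M.mem_E1_iff (hsub.2 y)] at hE1
    exact hE1.1 hfy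
  · rw [M.mem_E2_iff (hμ.1.2 y)] at hE2
    exact hE2.2 hfCμ

/-- Transfer of the firm-side cycle condition from `P^{μ,μt}` to `P^{μ,μW}`. -/
lemma Cfred_transfer [Fintype W] (hsub : M.SubstAll) {μ μt μW : Matching F W}
    (hμ : M.Stable μ) (hμt : M.Stable μt) (hμW : M.Stable μW)
    (hFt : M.geF μt μW) (hWt : M.geW μW μt) (hWt' : M.geW μt μ)
    (f : F) (a : W) (ha : a ∉ μt.fm f) :
    M.Cfred μ μW f (Finset.univ \ {a}) = M.Cfred μ μt f (Finset.univ \ {a}) := by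
  rw [M.Cfred_eq_filter, M.Cfred_eq_filter]
  set S : Finset W := Finset.univ \ {a} with hS
  have hDsub := M.Dall_sub hsub (μ := μ) hμt.1.1 hμW.1.1 hFt hWt f
  have hsub1 : S.filter (fun x => x ∉ M.Dall μ μt f) ⊆
      S.filter (fun x => x ∉ M.Dall μ μW f) := by
    intro x hx
    rw [Finset.mem_filter] at hx ⊢
    exact ⟨hx.1, fun h => hx.2 (hDsub h)⟩
  have hμtS : μt.fm f ⊆ S.filter (fun x => x ∉ M.Dall μ μW f) := by
    intro y hy
    rw [Finset.mem_filter, Finset.mem_sdiff]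
    refine ⟨⟨Finset.mem_univ _, ?_⟩, ?_⟩
    · simp only [Finset.mem_singleton]
      rintro rfl; exact ha hy
    · exact fun h => M.mut_not_Dall hsub hμ hμt hWt' hy (hDsub h)
  have hTsub : M.Cf f (S.filter (fun x => x ∉ M.Dall μ μW f)) ⊆
      S.filter (fun x => x ∉ M.Dall μ μt f) := by
    intro x hx
    have hxSW := M.Cf_subset _ _ hx
    rw [Finset.mem_filter] at hxSW
    rw [Finset.mem_filter]
    refine ⟨hxSW.1, ?_⟩
    have hxC : x ∈ M.Cf f (insert x (μt.fm f)) := hsub.1 f _ _ x hμtS hx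
    rintro ((h | h) | (hacc | (h | h)))
    · exact hxSW.2 (Or.inl (Or.inl h))
    · rw [M.mem_D2_iff (hμt.1.1 f)] at h
      exact h.2 hxC
    · exact hxSW.2 (Or.inr (Or.inl hacc))
    · rw [M.mem_E1_iff (hsub.2 x)] at h
      have hxnt : x ∉ μt.fm f := fun hh => h.1 ((μt.consistent f x).mp hh)
      exact hμt.2 f x ⟨hxnt, hxC, h.2⟩
    · exact hxSW.2 (Or.inr (Or.inr (Or.inr h)))
  exact (M.Cf_L1 hTsub hsub1).symm

/-- Transfer of the worker-side cycle condition from `P^{μ,μt}` to `P^{μ,μW}`. -/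
lemma Cwred_transfer (hsub : M.SubstAll) {μ μt μW : Matching F W}
    (hμ : M.Stable μ) (hμt : M.Stable μt) (hμW : M.Stable μW)
    (hge : M.geF μ μt) (hFt : M.geF μt μW) (hWt : M.geW μW μt) (hWt' : M.geW μt μ)
    (w : W) (g0 : F) (hg0 : g0 ∉ M.Eall μ μt w) :
    M.Cwred μ μW w (μ.wm w ∪ {g0}) = M.Cwred μ μt w (μ.wm w ∪ {g0}) := by
  rw [M.Cwred_eq_filter, M.Cwred_eq_filter]
  congr 1
  apply Finset.filter_congr
  intro g hg
  have hEsub := M.Eall_sub hsub (μ := μ) hμt.1.1 hμW.1.1 hFt hWt w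
  constructor
  · intro hnW
    rcases Finset.mem_union.mp hg with hgμ | hgg0
    · have hgμw : g ∈ μ.wm w := hgμ
      rintro ((h | h) | (hacc | (h | h)))
      · rw [M.mem_E1_iff (hsub.2 w)] at h
        obtain ⟨hgn, hgC⟩ := h
        have h1 : M.Cw w (insert g (μt.wm w)) = M.Cw w (μt.wm w ∪ μ.wm w) := by
          apply M.Cw_L1
          · rw [hWt' w]; exact Finset.subset_insert _ _
          · exact Finset.insert_subset (Finset.mem_union_right _ hgμw)
              Finset.subset_union_left
        rw [h1, hWt' w] at hgC
        exact hgn hgC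
      · rw [M.mem_E2_iff (hμ.1.2 w)] at h
        exact h.1 hgμw
      · exact hnW (Or.inr (Or.inl hacc))
      · exact hnW (Or.inr (Or.inr (Or.inl h)))
      · rw [M.mem_D2_iff (hμt.1.1 g)] at h
        obtain ⟨hwn, hwrej⟩ := h
        have hwμ : w ∈ M.Cf g (μ.fm g ∪ μt.fm g) := by
          rw [hge g]; exact (μ.consistent g w).mpr hgμw
        exact hwrej (hsub.1 g _ _ w Finset.subset_union_right hwμ)
    · rw [Finset.mem_singleton] at hgg0
      rw [hgg0]; exact hg0
  · intro hnt h
    exact hnt (hEsub h)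

end Market
/-- Lemma 4. With substitutable preferences satisfying the law of
aggregate demand and stable matchings `μ ⪰_F μ̃`, if `μ̃` is a cyclic matching under the
reduced profile `P^{μ,μ̃}`, then `μ̃` is a cyclic matching under the reduced profile
`P^μ = P^{μ,μ_W}`, where `μ_W` is the worker-optimal stable matching. -/
theorem cyclic_reduced_to_cyclic_Pmu {F W : Type*} [DecidableEq F] [DecidableEq W]
    [Fintype W] (M : Market F W) (hsub : M.SubstAll) (hlad : M.LADAll)
    (μW : Matching F W) (hμW : M.Stable μW) (hWopt : ∀ ν, M.Stable ν → M.geW μW ν)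
    (μ μt : Matching F W) (hμ : M.Stable μ) (hμt : M.Stable μt) (hge : M.geF μ μt)
    (hcm : M.IsCyclicMatching μ μt μt) :
    M.IsCyclicMatching μ μW μt := by
  obtain ⟨r, wseq, fseq, ⟨hr, hwp, hfp, hcond⟩, hfm⟩ := hcm
  have hWt : M.geW μW μt := hWopt μt hμt
  have hFt : M.geF μt μW := M.geF_of_geW hsub hμW hμt hWt
  have hWt' : M.geW μt μ := M.geW_of_geF hsub hμ hμt hge
  refine ⟨r, wseq, fseq, ⟨hr, hwp, hfp, fun i => ?_⟩, hfm⟩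
  obtain ⟨hi1, hi2, hi3⟩ := hcond i
  have hi1W : wseq i ∈ μ.fm (fseq i) ∧ wseq i ∉ μW.fm (fseq i) := by
    refine ⟨hi1.1, fun hW => ?_⟩
    have hfa : fseq i ∈ M.Cw (wseq i) (insert (fseq i) (μt.wm (wseq i))) := by
      have : fseq i ∈ M.Cw (wseq i) (μW.wm (wseq i) ∪ μt.wm (wseq i)) := by
        rw [hWt (wseq i)]; exact (μW.consistent _ _).mp hW
      exact hsub.2 _ _ _ _ Finset.subset_union_right this
    have haf : wseq i ∈ M.Cf (fseq i) (insert (wseq i) (μt.fm (fseq i))) := by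
      have : wseq i ∈ M.Cf (fseq i) (μ.fm (fseq i) ∪ μt.fm (fseq i)) := by
        rw [hge (fseq i)]; exact hi1.1
      exact hsub.1 _ _ _ _ Finset.subset_union_right this
    exact hμt.2 (fseq i) (wseq i) ⟨hi1.2, haf, hfa⟩
  refine ⟨hi1W, ?_, ?_⟩
  · rw [M.Cfred_transfer hsub hμ hμt hμW hFt hWt hWt' (fseq i) (wseq i) hi1.2]
    exact hi2
  · have hg0 : fseq i ∉ M.Eall μ μt (wseq (i + 1)) := by
      have hmem : fseq i ∈ M.Cwred μ μt (wseq (i + 1))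
          (μ.wm (wseq (i + 1)) ∪ {fseq i}) := by
        rw [hi3]; exact Finset.mem_insert_self _ _
      rw [M.Cwred_eq_filter] at hmem
      have := M.Cw_subset _ _ hmem
      exact (Finset.mem_filter.mp this).2
    rw [M.Cwred_transfer hsub hμ hμt hμW hge hFt hWt hWt' (wseq (i + 1)) (fseq i) hg0]
    exact hi3
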